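/- Let f:[s₀,∞)→ℝ be a bounded differentiable function satisfying the ODE f'(s) - (k/s) f(s) = g(s) for all s ≥ s₀, where k > 0 and g(s) = O(s⁻²) (i.e. there is C > 0 with |g(s)| ≤ C s⁻² for all s ≥ s₀). Then f(s) = O(s⁻¹), i.e. there exists C' > 0 such that |f(s)| ≤ C' s⁻¹ for all s ≥ s₀. -/

import Mathlib

/-! The integrating factor `s^(-k)` turns the equation into `(s^(-k) f)' = s^(-k) g`, whose size
is at most `C s^(-k-2) = -(c s^(-(k+1)))'` with `c = C / (k + 1)`. Both `s^(-k) f` (as `f` is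
bounded) and `c s^(-(k+1))` vanish at infinity, so comparing derivatives on `[s, ∞)` gives
`|s^(-k) f(s)| ≤ c s^(-(k+1))`, that is `|f(s)| ≤ c / s`. -/

open Set Filter Topology

lemma antitoneOn_Ici_of_hasDerivAt_nonpos {a : ℝ} {φ φ' : ℝ → ℝ}
    (hφ : ∀ t ≥ a, HasDerivAt φ (φ' t) t) (hφ' : ∀ t ≥ a, φ' t ≤ 0) :
    AntitoneOn φ (Ici a) :=
  antitoneOn_of_hasDerivWithinAt_nonpos (convex_Ici a)
    (fun t ht ↦ (hφ t ht).continuousAt.continuousWithinAt)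
    (fun t ht ↦ (hφ t (interior_subset ht)).hasDerivWithinAt)
    (fun t ht ↦ hφ' t (interior_subset ht))

lemma AntitoneOn.le_of_tendsto_Ici {a L : ℝ} {φ : ℝ → ℝ} (hφ : AntitoneOn φ (Ici a))
    (hlim : Tendsto φ atTop (𝓝 L)) {s : ℝ} (hs : a ≤ s) : L ≤ φ s :=
  le_of_tendsto hlim <| (eventually_ge_atTop s).mono fun _ hT ↦ hφ hs (hs.trans hT) hT

theorem abs_le_of_abs_deriv_le_neg_deriv {a : ℝ} {u u' w w' : ℝ → ℝ}
    (hu : ∀ t ≥ a, HasDerivAt u (u' t) t) (hw : ∀ t ≥ a, HasDerivAt w (w' t) t)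
    (hu'w' : ∀ t ≥ a, |u' t| ≤ -w' t)
    (hu0 : Tendsto u atTop (𝓝 0)) (hw0 : Tendsto w atTop (𝓝 0)) {s : ℝ} (hs : a ≤ s) :
    |u s| ≤ w s := by
  have hsum : AntitoneOn (fun t ↦ w t + u t) (Ici a) :=
    antitoneOn_Ici_of_hasDerivAt_nonpos (fun t ht ↦ (hw t ht).add (hu t ht))
      fun t ht ↦ by linarith [le_abs_self (u' t), hu'w' t ht]
  have hdiff : AntitoneOn (fun t ↦ w t - u t) (Ici a) :=
    antitoneOn_Ici_of_hasDerivAt_nonpos (fun t ht ↦ (hw t ht).sub (hu t ht))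
      fun t ht ↦ by linarith [neg_abs_le (u' t), hu'w' t ht]
  have h₁ := hsum.le_of_tendsto_Ici (by simpa using hw0.add hu0) hs
  have h₂ := hdiff.le_of_tendsto_Ici (by simpa using hw0.sub hu0) hs
  exact abs_le.2 ⟨by linarith, by linarith⟩

lemma hasDerivAt_rpow_neg_mul {f : ℝ → ℝ} {f' k t : ℝ} (hf : HasDerivAt f f' t) (ht : 0 < t) :
    HasDerivAt (fun x ↦ x ^ (-k) * f x) (t ^ (-k) * (f' - k / t * f t)) t := by
  refine ((Real.hasDerivAt_rpow_const (p := -k) (Or.inl ht.ne')).mul hf).congr_deriv ?_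
  rw [Real.rpow_sub ht, Real.rpow_one]
  field_simp
  ring

lemma hasDerivAt_div_mul_rpow_neg (c : ℝ) {p t : ℝ} (hp : p ≠ 0) (ht : 0 < t) :
    HasDerivAt (fun x ↦ c / p * x ^ (-p)) (-c * t ^ (-p - 1)) t := by
  refine ((Real.hasDerivAt_rpow_const (p := -p) (Or.inl ht.ne')).const_mul (c / p)).congr_deriv ?_
  field_simp

lemma abs_rpow_neg_mul_le {k C t x : ℝ} (ht : 0 < t) (hx : |x| ≤ C / t ^ 2) :
    |t ^ (-k) * x| ≤ C * t ^ (-k - 2) := by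
  have htk : 0 < t ^ (-k) := Real.rpow_pos_of_pos ht _
  calc |t ^ (-k) * x| = t ^ (-k) * |x| := by rw [abs_mul, abs_of_pos htk]
    _ ≤ t ^ (-k) * (C / t ^ 2) := mul_le_mul_of_nonneg_left hx htk.le
    _ = C * t ^ (-k - 2) := by
      rw [Real.rpow_sub ht, Real.rpow_two]; ring

lemma tendsto_rpow_neg_mul_of_abs_le {k M : ℝ} {f : ℝ → ℝ} (hk : 0 < k) {a : ℝ}
    (hM : ∀ s ≥ a, |f s| ≤ M) : Tendsto (fun x ↦ x ^ (-k) * f x) atTop (𝓝 0) :=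
  (tendsto_rpow_neg_atTop hk).zero_mul_isBoundedUnder_le
    ⟨M, eventually_map.2 <| (eventually_ge_atTop a).mono fun s hs ↦ hM s hs⟩

lemma abs_le_div_of_abs_rpow_neg_mul_le {k c s x : ℝ} (hs : 0 < s)
    (h : |s ^ (-k) * x| ≤ c * s ^ (-(k + 1))) : |x| ≤ c / s := by
  have hsk : 0 < s ^ (-k) := Real.rpow_pos_of_pos hs _
  rw [abs_mul, abs_of_pos hsk, neg_add, Real.rpow_add hs, Real.rpow_neg_one] at h
  rw [div_eq_mul_inv]
  nlinarith

/-- ODE decay lemma: a bounded solution of `f' - (k/s) f = g` with `g = O(s⁻²)`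
satisfies `f = O(s⁻¹)` on `[s₀, ∞)`. -/
theorem stmt0 (s₀ k C : ℝ) (hs₀ : 0 < s₀) (hk : 0 < k) (hC : 0 < C)
    (f g : ℝ → ℝ)
    (hbdd : ∃ M : ℝ, ∀ s ≥ s₀, |f s| ≤ M)
    (hode : ∀ s ≥ s₀, HasDerivAt f (k / s * f s + g s) s)
    (hg : ∀ s ≥ s₀, |g s| ≤ C / s ^ 2) :
    ∃ C' > 0, ∀ s ≥ s₀, |f s| ≤ C' / s := by
  obtain ⟨M, hM⟩ := hbdd
  have hpos : ∀ t ≥ s₀, 0 < t := fun t ht ↦ hs₀.trans_le ht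
  have hk₁ : 0 < k + 1 := by linarith
  have hu : ∀ t ≥ s₀, HasDerivAt (fun x ↦ x ^ (-k) * f x) (t ^ (-k) * g t) t := fun t ht ↦ by
    simpa using hasDerivAt_rpow_neg_mul (k := k) (hode t ht) (hpos t ht)
  have hw : ∀ t ≥ s₀, HasDerivAt (fun x ↦ C / (k + 1) * x ^ (-(k + 1))) (-C * t ^ (-k - 2)) t :=
    fun t ht ↦ by
      convert hasDerivAt_div_mul_rpow_neg C hk₁.ne' (hpos t ht) using 3
      ring
  have hw0 : Tendsto (fun x ↦ C / (k + 1) * x ^ (-(k + 1))) atTop (𝓝 0) := by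
    simpa using (tendsto_rpow_neg_atTop hk₁).const_mul (C / (k + 1))
  refine ⟨C / (k + 1), by positivity, fun s hs ↦
    abs_le_div_of_abs_rpow_neg_mul_le (k := k) (hpos s hs) ?_⟩
  refine abs_le_of_abs_deriv_le_neg_deriv hu hw (fun t ht ↦ ?_)
    (tendsto_rpow_neg_mul_of_abs_le hk hM) hw0 hs
  simpa using abs_rpow_neg_mul_le (hpos t ht) (hg t ht)
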